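/- arXiv:2008.12823 — 6 statements merged into one kernel-verified Lean document; each statement's English description precedes it below -/
import Mathlib

section
/- For any ρ ≥ 0 and any guessing function G : 𝒳 → {1,...,|𝒳|} (a bijection), E[G(X)^ρ] ≥ (1 + log|𝒳|)^{-ρ} · (Σ_{x∈𝒳} P_X(x)^{1/(1+ρ)})^{1+ρ}. -/
/-- Arikan's lower bound: for any `ρ ≥ 0` and any guessing function `G`
(a bijection from `𝒳` onto `{1, ..., |𝒳|}`),
`E[G(X)^ρ] ≥ (1 + log|𝒳|)^{-ρ} (∑_x P_X(x)^{1/(1+ρ)})^{1+ρ}`. -/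
theorem arikan_lower_bound
    {𝒳 : Type*} [Fintype 𝒳] (P : 𝒳 → ℝ) (hP : ∀ x, 0 ≤ P x)
    (hsum : ∑ x, P x = 1) (G : 𝒳 → ℕ)
    (hG : Set.BijOn G Set.univ (Set.Icc 1 (Fintype.card 𝒳)))
    (ρ : ℝ) (hρ : 0 ≤ ρ) :
    (1 + Real.log (Fintype.card 𝒳)) ^ (-ρ) * (∑ x, P x ^ (1 / (1 + ρ))) ^ (1 + ρ)
      ≤ ∑ x, P x * (G x : ℝ) ^ ρ := by
  set M := Fintype.card 𝒳 with hM
  have hne : Nonempty 𝒳 := by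
    by_contra h
    rw [not_nonempty_iff] at h
    rw [Finset.univ_eq_empty, Finset.sum_empty] at hsum
    norm_num at hsum
  have hM1 : 1 ≤ M := Fintype.card_pos
  have hGx : ∀ x, 1 ≤ G x := fun x => (hG.mapsTo (Set.mem_univ x)).1
  have hGpos : ∀ x, (0 : ℝ) < (G x : ℝ) := fun x => by
    exact_mod_cast Nat.lt_of_lt_of_le Nat.zero_lt_one (hGx x)
  set L := 1 + Real.log M with hL
  have hlogM : 0 ≤ Real.log M := Real.log_natCast_nonneg M
  have hLpos : (0 : ℝ) < L := by positivity
  -- harmonic sum bound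
  have hH : ∑ x : 𝒳, ((G x : ℝ))⁻¹ ≤ L := by
    have hre : ∑ x : 𝒳, ((G x : ℝ))⁻¹ = ∑ k ∈ Finset.Icc 1 M, ((k : ℝ))⁻¹ := by
      refine Finset.sum_bij (fun x _ => G x) ?_ ?_ ?_ ?_
      · intro a _
        have := hG.mapsTo (Set.mem_univ a)
        simpa [Finset.mem_Icc] using this
      · intro a _ b _ h
        exact hG.injOn (Set.mem_univ a) (Set.mem_univ b) h
      · intro b hb
        have hb' : b ∈ Set.Icc 1 M := by simpa [Finset.mem_Icc] using hb
        obtain ⟨a, _, ha⟩ := hG.surjOn hb'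
        exact ⟨a, Finset.mem_univ a, ha⟩
      · intro a _; rfl
    rw [hre]
    calc ∑ k ∈ Finset.Icc 1 M, ((k : ℝ))⁻¹ = ((harmonic M : ℚ) : ℝ) := by
          simp only [harmonic_eq_sum_Icc, Rat.cast_sum, Rat.cast_inv, Rat.cast_natCast]
      _ ≤ 1 + Real.log M := harmonic_le_one_add_log M
  rcases eq_or_lt_of_le hρ with hρ0 | hρpos
  · subst hρ0
    simp only [neg_zero, Real.rpow_zero, add_zero, one_mul, div_one, Real.rpow_one, hsum,
      mul_one, le_refl]
  -- main case ρ > 0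
  set p := 1 + ρ with hp
  set q := (1 + ρ) / ρ with hq
  have hppos : 0 < p := by positivity
  have hqpos : 0 < q := by rw [hq]; positivity
  have hpq : p.HolderConjugate q := Real.holderConjugate_iff.mpr <| by
    constructor
    · rw [hp]; linarith
    · rw [hp, hq]; field_simp
  have hE0 : 0 ≤ ∑ x, P x * (G x : ℝ) ^ ρ :=
    Finset.sum_nonneg fun x _ => mul_nonneg (hP x) (Real.rpow_nonneg (hGpos x).le _)
  set E := ∑ x, P x * (G x : ℝ) ^ ρ with hEdef
  set S := ∑ x, P x ^ (1 / p) with hSdef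
  have hS0 : 0 ≤ S := Finset.sum_nonneg fun x _ => Real.rpow_nonneg (hP x) _
  have h1q : (1 : ℝ) / q = ρ / p := by
    rw [hq, hp]
    rw [one_div_div]
  -- Hölder
  have holder : S ≤ E ^ (1 / p) * L ^ (1 / q) := by
    have key := Real.inner_le_Lp_mul_Lq_of_nonneg (s := Finset.univ)
      (f := fun x => (P x * (G x : ℝ) ^ ρ) ^ (1 / p))
      (g := fun x => ((G x : ℝ)) ^ (-(1 / q))) hpq
      (fun i _ => Real.rpow_nonneg (mul_nonneg (hP i) (Real.rpow_nonneg (hGpos i).le _)) _)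
      (fun i _ => Real.rpow_nonneg (hGpos i).le _)
    have e1 : ∀ x : 𝒳, (P x * (G x : ℝ) ^ ρ) ^ (1 / p) * ((G x : ℝ)) ^ (-(1 / q))
        = P x ^ (1 / p) := by
      intro x
      have h2 : ((G x : ℝ) ^ ρ) ^ (1 / p) * ((G x : ℝ)) ^ (-(1 / q)) = 1 := by
        rw [← Real.rpow_mul (hGpos x).le, ← Real.rpow_add (hGpos x)]
        have harith : ρ * (1 / p) + -(1 / q) = 0 := by
          rw [h1q]; ring
        rw [harith, Real.rpow_zero]
      rw [Real.mul_rpow (hP x) (Real.rpow_nonneg (hGpos x).le _), mul_assoc, h2, mul_one]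
    have e2 : ∀ x : 𝒳, ((P x * (G x : ℝ) ^ ρ) ^ (1 / p)) ^ p = P x * (G x : ℝ) ^ ρ := by
      intro x
      rw [← Real.rpow_mul (mul_nonneg (hP x) (Real.rpow_nonneg (hGpos x).le _)),
        one_div_mul_cancel hppos.ne', Real.rpow_one]
    have e3 : ∀ x : 𝒳, (((G x : ℝ)) ^ (-(1 / q))) ^ q = ((G x : ℝ))⁻¹ := by
      intro x
      rw [← Real.rpow_mul (hGpos x).le, neg_mul, one_div_mul_cancel hqpos.ne',
        Real.rpow_neg_one]
    rw [Finset.sum_congr rfl fun x _ => e1 x, Finset.sum_congr rfl fun x _ => e2 x,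
      Finset.sum_congr rfl fun x _ => e3 x] at key
    refine key.trans (mul_le_mul_of_nonneg_left ?_ (Real.rpow_nonneg hE0 _))
    exact Real.rpow_le_rpow (Finset.sum_nonneg fun x _ => (inv_nonneg.mpr (hGpos x).le))
      hH (one_div_pos.mpr hqpos).le
  -- conclude
  rw [Real.rpow_neg hLpos.le, inv_mul_le_iff₀ (by positivity)]
  calc S ^ p ≤ (E ^ (1 / p) * L ^ (1 / q)) ^ p :=
        Real.rpow_le_rpow hS0 holder hppos.le
    _ = E * L ^ ρ := by
        rw [Real.mul_rpow (Real.rpow_nonneg hE0 _) (Real.rpow_nonneg hLpos.le _),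
          ← Real.rpow_mul hE0, one_div_mul_cancel hppos.ne', Real.rpow_one,
          ← Real.rpow_mul hLpos.le, h1q, div_mul_cancel₀ _ hppos.ne']
    _ = L ^ ρ * E := mul_comm _ _
end

section
/- Let G* be the optimal guessing function, obtained by listing elements of 𝒳 in non-increasing order of P_X-probability. Then for any ρ ≥ 0, E[G*(X)^ρ] ≤ (Σ_{x∈𝒳} P_X(x)^{1/(1+ρ)})^{1+ρ}. -/
/-- Arikan's upper bound: for the optimal guessing function `G*` (listing the
elements of `𝒳` in non-increasing order of probability) and any `ρ ≥ 0`,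
`E[G*(X)^ρ] ≤ (∑_x P_X(x)^{1/(1+ρ)})^{1+ρ}`. -/
theorem arikan_upper_bound
    {𝒳 : Type*} [Fintype 𝒳] (P : 𝒳 → ℝ) (hP : ∀ x, 0 ≤ P x)
    (hsum : ∑ x, P x = 1) (Gstar : 𝒳 → ℕ)
    (hG : Set.BijOn Gstar Set.univ (Set.Icc 1 (Fintype.card 𝒳)))
    (hord : ∀ x x', Gstar x ≤ Gstar x' → P x' ≤ P x)
    (ρ : ℝ) (hρ : 0 ≤ ρ) :
    ∑ x, P x * (Gstar x : ℝ) ^ ρ ≤ (∑ x, P x ^ (1 / (1 + ρ))) ^ (1 + ρ) := by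
  classical
  set α : ℝ := 1 / (1 + ρ) with hαdef
  have h1ρ : (0:ℝ) < 1 + ρ := by linarith
  have hα : 0 < α := by positivity
  have hα1 : α * (1 + ρ) = 1 := by
    rw [hαdef, one_div, inv_mul_cancel₀ h1ρ.ne']
  set S : ℝ := ∑ x, P x ^ α with hSdef
  -- S > 0
  have hSterm : ∀ x : 𝒳, 0 ≤ P x ^ α := fun x => Real.rpow_nonneg (hP x) α
  have hex : ∃ x : 𝒳, 0 < P x := by
    by_contra h
    push_neg at h
    have : ∀ x : 𝒳, P x = 0 := fun x => le_antisymm (h x) (hP x)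
    simp [this] at hsum
  obtain ⟨x₀, hx₀⟩ := hex
  have hS : 0 < S := by
    have := Finset.single_le_sum (f := fun x => P x ^ α)
      (fun x _ => hSterm x) (Finset.mem_univ x₀)
    have h0 : 0 < P x₀ ^ α := Real.rpow_pos_of_pos hx₀ α
    linarith
  -- key bound : Gstar x ≤ S / P x ^ α  when P x > 0
  have key : ∀ x : 𝒳, 0 < P x → (Gstar x : ℝ) * P x ^ α ≤ S := by
    intro x hx
    -- cardinality of A = {x' | Gstar x' ≤ Gstar x} is Gstar x
    set A : Finset 𝒳 := Finset.univ.filter (fun x' => Gstar x' ≤ Gstar x) with hAdef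
    have hGx : Gstar x ∈ Set.Icc 1 (Fintype.card 𝒳) := hG.mapsTo (Set.mem_univ x)
    have hcard : A.card = Gstar x := by
      have : A.card = (Finset.Icc 1 (Gstar x)).card := by
        apply Finset.card_bij (fun x' _ => Gstar x')
        · intro a ha
          have h1 : Gstar a ∈ Set.Icc 1 (Fintype.card 𝒳) := hG.mapsTo (Set.mem_univ a)
          simp only [hAdef, Finset.mem_filter] at ha
          exact Finset.mem_Icc.mpr ⟨h1.1, ha.2⟩
        · intro a ha b hb hab
          exact hG.injOn (Set.mem_univ a) (Set.mem_univ b) hab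
        · intro k hk
          rw [Finset.mem_Icc] at hk
          have hk' : k ∈ Set.Icc 1 (Fintype.card 𝒳) := ⟨hk.1, le_trans hk.2 hGx.2⟩
          obtain ⟨a, -, ha⟩ := hG.surjOn hk'
          refine ⟨a, ?_, ha⟩
          simp only [hAdef, Finset.mem_filter]
          exact ⟨Finset.mem_univ a, by rw [ha]; exact hk.2⟩
      rw [this, Nat.card_Icc]
      omega
    -- each a ∈ A has P x ≤ P a, so 1 ≤ (P a / P x) ^ α
    have hbound : (A.card : ℝ) * P x ^ α ≤ S := by
      have h1 : ∀ a ∈ A, P x ^ α ≤ P a ^ α := by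
        intro a ha
        simp only [hAdef, Finset.mem_filter] at ha
        exact Real.rpow_le_rpow (hP x) (hord a x ha.2) hα.le
      calc (A.card : ℝ) * P x ^ α = ∑ _a ∈ A, P x ^ α := by
            rw [Finset.sum_const, nsmul_eq_mul]
        _ ≤ ∑ a ∈ A, P a ^ α := Finset.sum_le_sum h1
        _ ≤ S := Finset.sum_le_sum_of_subset_of_nonneg (Finset.subset_univ A)
            (fun a _ _ => hSterm a)
    rwa [hcard] at hbound
  -- pointwise bound: P x * (Gstar x)^ρ ≤ P x ^ α * S ^ ρ
  have point : ∀ x : 𝒳, P x * (Gstar x : ℝ) ^ ρ ≤ P x ^ α * S ^ ρ := by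
    intro x
    rcases eq_or_lt_of_le (hP x) with h0 | hx
    · rw [← h0, Real.zero_rpow hα.ne', zero_mul, zero_mul]
    · have hPα : 0 < P x ^ α := Real.rpow_pos_of_pos hx α
      have hGle : (Gstar x : ℝ) ≤ S / P x ^ α := by
        rw [le_div_iff₀ hPα]
        exact key x hx
      have hGnn : (0:ℝ) ≤ (Gstar x : ℝ) := Nat.cast_nonneg _
      have h2 : (Gstar x : ℝ) ^ ρ ≤ (S / P x ^ α) ^ ρ :=
        Real.rpow_le_rpow hGnn hGle hρ
      have h3 : P x * (Gstar x : ℝ) ^ ρ ≤ P x * (S / P x ^ α) ^ ρ :=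
        mul_le_mul_of_nonneg_left h2 (hP x)
      have e1 : P x ^ α * P x ^ (α * ρ) = P x := by
        rw [← Real.rpow_add hx, show α + α * ρ = 1 by rw [← hα1]; ring, Real.rpow_one]
      have h4 : P x * (S / P x ^ α) ^ ρ = P x ^ α * S ^ ρ := by
        rw [Real.div_rpow hS.le hPα.le, ← Real.rpow_mul (hP x), mul_div_assoc',
          div_eq_iff (by positivity : P x ^ (α * ρ) ≠ 0)]
        linear_combination (-(S ^ ρ)) * e1
      rw [h4] at h3
      exact h3
  calc ∑ x, P x * (Gstar x : ℝ) ^ ρ ≤ ∑ x, P x ^ α * S ^ ρ :=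
        Finset.sum_le_sum (fun x _ => point x)
    _ = S * S ^ ρ := by rw [← Finset.sum_mul]
    _ = S ^ (1 + ρ) := by
        rw [Real.rpow_add hS, Real.rpow_one]
end

section
/- Let U_N be uniform on {1,...,N} and let V_{(N,K)} be the random variable on {1,...,N} with P(V_{(N,K)} = i) = 1/(N−1) for 1 ≤ i ≤ N−K and P(V_{(N,K)} = i) = (K−1)/(K(N−1)) for N−K < i ≤ N, where 2 ≤ K ≤ N−1. Then for every α > 0, E[U_N^α] > E[V_{(N,K)}^α] ≥ E[U_{N−1}^α], where U_{N−1} is uniform on {1,...,N−1}. -/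
/-- Soft elimination lemma: let `U_N` be uniform on `{1,...,N}` and let
`V_{(N,K)}` put mass `1/(N-1)` on `1 ≤ i ≤ N-K` and `(K-1)/(K(N-1))` on
`N-K < i ≤ N`.  Then for every `α > 0`,
`E[U_N^α] > E[V_{(N,K)}^α] ≥ E[U_{N-1}^α]`. -/
theorem soft_elimination (N K : ℕ) (hN : 3 ≤ N) (hK1 : 2 ≤ K) (hK2 : K ≤ N - 1)
    (α : ℝ) (hα : 0 < α) :
    (∑ i ∈ Finset.Icc 1 (N - K), (i : ℝ) ^ α * (1 / ((N : ℝ) - 1))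
        + ∑ i ∈ Finset.Icc (N - K + 1) N,
            (i : ℝ) ^ α * (((K : ℝ) - 1) / ((K : ℝ) * ((N : ℝ) - 1)))
      < ∑ i ∈ Finset.Icc 1 N, (i : ℝ) ^ α * (1 / (N : ℝ)))
    ∧ (∑ i ∈ Finset.Icc 1 (N - 1), (i : ℝ) ^ α * (1 / ((N : ℝ) - 1))
      ≤ ∑ i ∈ Finset.Icc 1 (N - K), (i : ℝ) ^ α * (1 / ((N : ℝ) - 1))
        + ∑ i ∈ Finset.Icc (N - K + 1) N,
            (i : ℝ) ^ α * (((K : ℝ) - 1) / ((K : ℝ) * ((N : ℝ) - 1)))) := by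
  set m := N - K with hmdef
  have hmK : m + K = N := by omega
  have hm1 : 1 ≤ m := by omega
  -- rewrite all sums of products as (sum) * const
  rw [← Finset.sum_mul, ← Finset.sum_mul, ← Finset.sum_mul, ← Finset.sum_mul]
  -- rewrite Icc as Ioc
  have e1 : Finset.Icc 1 m = Finset.Ioc 0 m := by rw [← Finset.Icc_add_one_left_eq_Ioc]; rfl
  have e2 : Finset.Icc (m + 1) N = Finset.Ioc m N := by rw [← Finset.Icc_add_one_left_eq_Ioc]
  have e3 : Finset.Icc 1 N = Finset.Ioc 0 N := by rw [← Finset.Icc_add_one_left_eq_Ioc]; rfl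
  have e4 : Finset.Icc 1 (N - 1) = Finset.Ioc 0 (N - 1) := by rw [← Finset.Icc_add_one_left_eq_Ioc]; rfl
  rw [e1, e2, e3, e4]
  set A : ℝ := ∑ i ∈ Finset.Ioc 0 m, (i : ℝ) ^ α with hA
  set T : ℝ := ∑ i ∈ Finset.Ioc m (N - 1), (i : ℝ) ^ α with hT
  have hsplit1 : ∑ i ∈ Finset.Ioc 0 N, (i : ℝ) ^ α = A + (T + (N : ℝ) ^ α) := by
    rw [hA, hT]
    rw [← Finset.sum_Ioc_consecutive _ (Nat.zero_le m) (by omega : m ≤ N)]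
    congr 1
    rw [← Finset.sum_Ioc_consecutive _ (by omega : m ≤ N - 1) (by omega : N - 1 ≤ N)]
    congr 1
    have : Finset.Ioc (N - 1) N = {N} := by
      ext x; simp [Finset.mem_Ioc]; omega
    rw [this, Finset.sum_singleton]
  have hsplit2 : ∑ i ∈ Finset.Ioc 0 (N - 1), (i : ℝ) ^ α = A + T := by
    rw [hA, hT, Finset.sum_Ioc_consecutive _ (Nat.zero_le m) (by omega : m ≤ N - 1)]
  have hsplit3 : ∑ i ∈ Finset.Ioc m N, (i : ℝ) ^ α = T + (N : ℝ) ^ α := by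
    rw [hT, ← Finset.sum_Ioc_consecutive _ (by omega : m ≤ N - 1) (by omega : N - 1 ≤ N)]
    congr 1
    have : Finset.Ioc (N - 1) N = {N} := by
      ext x; simp [Finset.mem_Ioc]; omega
    rw [this, Finset.sum_singleton]
  rw [hsplit1, hsplit2, hsplit3]
  set c : ℝ := ((m : ℝ) + 1) ^ α with hc
  have hc0 : 0 < c := Real.rpow_pos_of_pos (by positivity) α
  have hNα : (0:ℝ) < (N : ℝ) ^ α := Real.rpow_pos_of_pos (by positivity) α
  -- A < m * c
  have hAlt : A < (m : ℝ) * c := by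
    have h1 : A < ∑ _i ∈ Finset.Ioc 0 m, c := by
      apply Finset.sum_lt_sum_of_nonempty
      · exact ⟨m, by simp [Finset.mem_Ioc]; omega⟩
      · intro i hi
        simp only [Finset.mem_Ioc] at hi
        apply Real.rpow_lt_rpow (by positivity) _ hα
        exact_mod_cast Nat.lt_succ_of_le hi.2
    simpa [Nat.card_Ioc, mul_comm] using h1
  -- K * c ≤ T + N^α
  have hS2ge : (K : ℝ) * c ≤ T + (N : ℝ) ^ α := by
    rw [← hsplit3]
    have h1 : (Finset.Ioc m N).card • c ≤ ∑ i ∈ Finset.Ioc m N, (i : ℝ) ^ α := by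
      apply Finset.card_nsmul_le_sum
      intro i hi
      simp only [Finset.mem_Ioc] at hi
      apply Real.rpow_le_rpow (by positivity) _ hα.le
      exact_mod_cast Nat.succ_le_of_lt hi.1
    have hcard : (Finset.Ioc m N).card = K := by rw [Nat.card_Ioc]; omega
    rw [hcard] at h1
    simpa using h1
  -- T ≤ (K-1) * N^α
  have hTle : T ≤ ((K : ℝ) - 1) * (N : ℝ) ^ α := by
    have h1 : T ≤ (Finset.Ioc m (N - 1)).card • ((N : ℝ) ^ α) := by
      apply Finset.sum_le_card_nsmul
      intro i hi
      simp only [Finset.mem_Ioc] at hi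
      apply Real.rpow_le_rpow (by positivity) _ hα.le
      exact_mod_cast le_trans hi.2 (Nat.sub_le N 1)
    have hcard : (Finset.Ioc m (N - 1)).card = K - 1 := by rw [Nat.card_Ioc]; omega
    rw [hcard] at h1
    have : ((K - 1 : ℕ) : ℝ) = (K : ℝ) - 1 := by
      push_cast [Nat.cast_sub (by omega : 1 ≤ K)]; ring
    simpa [this] using h1
  have hkey1 : (K : ℝ) * A < (m : ℝ) * (T + (N : ℝ) ^ α) := by
    calc (K : ℝ) * A < (K : ℝ) * ((m : ℝ) * c) := by
          apply mul_lt_mul_of_pos_left hAlt (by positivity)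
      _ = (m : ℝ) * ((K : ℝ) * c) := by ring
      _ ≤ (m : ℝ) * (T + (N : ℝ) ^ α) := by
          apply mul_le_mul_of_nonneg_left hS2ge (by positivity)
  have hNK : (m : ℝ) + (K : ℝ) = (N : ℝ) := by exact_mod_cast hmK
  have hN1 : (0:ℝ) < (N : ℝ) - 1 := by
    have : (3:ℝ) ≤ (N : ℝ) := by exact_mod_cast hN
    linarith
  have hN0 : (0:ℝ) < (N : ℝ) := by linarith
  have hK0 : (0:ℝ) < (K : ℝ) := by exact_mod_cast (by omega : 0 < K)
  have hT0 : 0 ≤ T := Finset.sum_nonneg fun i _ => by positivity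
  have hA0 : 0 ≤ A := Finset.sum_nonneg fun i _ => by positivity
  have hprod : (N : ℝ) * (T + (N : ℝ) ^ α) = ((m : ℝ) + (K : ℝ)) * (T + (N : ℝ) ^ α) := by
    rw [hNK]
  constructor
  · have lhs_eq : A * (1 / ((N : ℝ) - 1))
        + (T + (N : ℝ) ^ α) * (((K : ℝ) - 1) / ((K : ℝ) * ((N : ℝ) - 1)))
        = ((K : ℝ) * A + ((K : ℝ) - 1) * (T + (N : ℝ) ^ α)) / ((K : ℝ) * ((N : ℝ) - 1)) := by
      field_simp
    rw [lhs_eq, mul_one_div, div_lt_div_iff₀ (by positivity) hN0]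
    nlinarith [hkey1, hprod]
  · have lhs_eq : (A + T) * (1 / ((N : ℝ) - 1)) = ((K : ℝ) * (A + T)) / ((K : ℝ) * ((N : ℝ) - 1)) := by
      field_simp
    have rhs_eq : A * (1 / ((N : ℝ) - 1))
        + (T + (N : ℝ) ^ α) * (((K : ℝ) - 1) / ((K : ℝ) * ((N : ℝ) - 1)))
        = ((K : ℝ) * A + ((K : ℝ) - 1) * (T + (N : ℝ) ^ α)) / ((K : ℝ) * ((N : ℝ) - 1)) := by
      field_simp
    rw [lhs_eq, rhs_eq, div_le_div_iff₀ (by positivity) (by positivity)]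
    nlinarith [mul_le_mul_of_nonneg_right hTle (mul_pos hK0 hN1).le]
end

section
/- Let X be a random variable on a finite alphabet 𝒳 and Y a correlated random variable on finite 𝒴. Define the conditional Rényi entropy of order α ∈ (0,1) as H_α(X|Y) = Σ_y P_Y(y)·(1/(1−α)) log Σ_x P_{X|Y}(x|y)^α. Then for ρ > 0, E[G*(X|Y)^ρ] ≤ Σ_y P_Y(y)·(Σ_x P_{X|Y}(x|y)^{1/(1+ρ)})^{1+ρ}, where G*(·|y) is the optimal guessing function for the conditional distribution P_{X|Y}(·|y). -/
open Finset Real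

private lemma guess_card {𝒳 : Type*} [Fintype 𝒳] (g : 𝒳 → ℕ)
    (hbij : Set.BijOn g Set.univ (Set.Icc 1 (Fintype.card 𝒳))) (x : 𝒳) :
    (Finset.univ.filter (fun x' => g x' ≤ g x)).card = g x := by
  have hmem : ∀ a, g a ∈ Set.Icc 1 (Fintype.card 𝒳) := fun a => hbij.mapsTo (Set.mem_univ a)
  have h : (Finset.univ.filter (fun x' => g x' ≤ g x)).card = (Finset.Icc 1 (g x)).card := by
    apply Finset.card_bij (fun a _ => g a)
    · intro a ha
      rw [Finset.mem_filter] at ha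
      exact Finset.mem_Icc.2 ⟨(hmem a).1, ha.2⟩
    · intro a _ b _ hab
      exact hbij.injOn (Set.mem_univ a) (Set.mem_univ b) hab
    · intro k hk
      rw [Finset.mem_Icc] at hk
      obtain ⟨a, -, ha⟩ := hbij.surjOn ⟨hk.1, hk.2.trans (hmem x).2⟩
      exact ⟨a, by simp [Finset.mem_filter, ha, hk.2], ha⟩
  rw [h, Nat.card_Icc]
  omega

private lemma arikan_single {𝒳 : Type*} [Fintype 𝒳] (p : 𝒳 → ℝ) (hp : ∀ x, 0 ≤ p x)
    (g : 𝒳 → ℕ) (hbij : Set.BijOn g Set.univ (Set.Icc 1 (Fintype.card 𝒳)))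
    (hord : ∀ x x', g x ≤ g x' → p x' ≤ p x)
    (ρ : ℝ) (hρ : 0 < ρ) :
    ∑ x, p x * (g x : ℝ) ^ ρ ≤ (∑ x, p x ^ (1/(1+ρ))) ^ (1+ρ) := by
  have h1ρ : (0:ℝ) < 1 + ρ := by linarith
  set β : ℝ := 1/(1+ρ) with hβ
  have hβpos : 0 < β := by positivity
  set T := ∑ x, p x ^ β with hT
  have hTnn : 0 ≤ T := Finset.sum_nonneg fun x _ => rpow_nonneg (hp x) β
  rcases eq_or_lt_of_le hTnn with hT0 | hTpos
  · -- T = 0 : all p x = 0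
    have hpz : ∀ x, p x = 0 := by
      intro x
      by_contra hne
      have hx : 0 < p x := lt_of_le_of_ne (hp x) (Ne.symm hne)
      have : 0 < T := by
        have h1 : 0 < p x ^ β := rpow_pos_of_pos hx β
        have h2 : p x ^ β ≤ T :=
          Finset.single_le_sum (fun i _ => rpow_nonneg (hp i) β) (Finset.mem_univ x)
        linarith
      linarith [hT0]
    have hL : ∑ x, p x * (g x : ℝ) ^ ρ = 0 := by
      apply Finset.sum_eq_zero; intro x _; rw [hpz x]; ring
    rw [hL, ← hT0, zero_rpow (ne_of_gt h1ρ)]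
  · -- T > 0
    have key : ∀ x, p x * (g x : ℝ) ^ ρ ≤ p x ^ β * T ^ ρ := by
      intro x
      rcases eq_or_lt_of_le (hp x) with h0 | h0
      · rw [← h0, zero_mul, zero_rpow (ne_of_gt hβpos), zero_mul]
      · -- step 1: (g x) * p x ^ β ≤ T
        have hstep : (g x : ℝ) * p x ^ β ≤ T := by
          have hcard := guess_card g hbij x
          have heq : (g x : ℝ) * p x ^ β
              = ∑ x' ∈ Finset.univ.filter (fun x' => g x' ≤ g x), p x ^ β := by
            rw [Finset.sum_const, nsmul_eq_mul, hcard]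
          rw [heq]
          calc ∑ x' ∈ Finset.univ.filter (fun x' => g x' ≤ g x), p x ^ β
              ≤ ∑ x' ∈ Finset.univ.filter (fun x' => g x' ≤ g x), p x' ^ β := by
                apply Finset.sum_le_sum
                intro x' hx'
                rw [Finset.mem_filter] at hx'
                exact rpow_le_rpow (hp x) (hord x' x hx'.2) (le_of_lt hβpos)
            _ ≤ T := Finset.sum_le_sum_of_subset_of_nonneg (Finset.filter_subset _ _)
                (fun i _ _ => rpow_nonneg (hp i) β)
        have hpβ : 0 < p x ^ β := rpow_pos_of_pos h0 β
        have hg : (g x : ℝ) ≤ T / p x ^ β := (le_div_iff₀ hpβ).2 hstep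
        have hgρ : (g x : ℝ) ^ ρ ≤ (T / p x ^ β) ^ ρ :=
          rpow_le_rpow (Nat.cast_nonneg _) hg (le_of_lt hρ)
        have h2 : p x * (g x : ℝ) ^ ρ ≤ p x * (T / p x ^ β) ^ ρ :=
          mul_le_mul_of_nonneg_left hgρ (hp x)
        have h3 : p x * (T / p x ^ β) ^ ρ = p x ^ β * T ^ ρ := by
          rw [div_rpow hTnn (le_of_lt hpβ), ← Real.rpow_mul (hp x)]
          have hβρ : β + β * ρ = 1 := by rw [hβ]; field_simp
          have hmul : p x ^ β * p x ^ (β * ρ) = p x := by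
            rw [← Real.rpow_add h0, hβρ, Real.rpow_one]
          have hpβρ : (0:ℝ) < p x ^ (β * ρ) := rpow_pos_of_pos h0 _
          have hBinv : p x ^ (β * ρ) * (p x ^ (β * ρ))⁻¹ = 1 := mul_inv_cancel₀ hpβρ.ne'
          rw [div_eq_mul_inv]
          linear_combination (-(T ^ ρ) * (p x ^ (β * ρ))⁻¹) * hmul + p x ^ β * T ^ ρ * hBinv
        calc p x * (g x : ℝ) ^ ρ ≤ p x * (T / p x ^ β) ^ ρ := h2
          _ = p x ^ β * T ^ ρ := h3
    calc ∑ x, p x * (g x : ℝ) ^ ρ ≤ ∑ x, p x ^ β * T ^ ρ :=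
          Finset.sum_le_sum fun x _ => key x
      _ = T * T ^ ρ := by rw [← Finset.sum_mul]
      _ = T ^ (1+ρ) := by
          rw [Real.rpow_add hTpos, Real.rpow_one]

/-- Arikan's conditional guesswork upper bound: for each `y`, `G(y, ·)` is the
optimal guessing function for the conditional distribution `P_{X|Y}(·|y)`
(i.e. a bijection onto `{1,...,|𝒳|}` listing `x` in non-increasing order of
`P(x,y)`), and for `ρ > 0`,
`E[G*(X|Y)^ρ] ≤ ∑_y P_Y(y) (∑_x P_{X|Y}(x|y)^{1/(1+ρ)})^{1+ρ}`. -/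
theorem arikan_conditional_upper_bound
    {𝒳 𝒴 : Type*} [Fintype 𝒳] [Fintype 𝒴]
    (P : 𝒳 → 𝒴 → ℝ) (hP : ∀ x y, 0 ≤ P x y)
    (hsum : ∑ x, ∑ y, P x y = 1)
    (G : 𝒴 → 𝒳 → ℕ)
    (hbij : ∀ y, Set.BijOn (G y) Set.univ (Set.Icc 1 (Fintype.card 𝒳)))
    (hord : ∀ y x x', G y x ≤ G y x' → P x' y ≤ P x y)
    (ρ : ℝ) (hρ : 0 < ρ) :
    ∑ y, ∑ x, P x y * (G y x : ℝ) ^ ρ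
      ≤ ∑ y, (∑ x, P x y) *
          (∑ x, (P x y / ∑ x', P x' y) ^ (1 / (1 + ρ))) ^ (1 + ρ) := by
  have h1ρ : (0:ℝ) < 1 + ρ := by linarith
  apply Finset.sum_le_sum
  intro y _
  set S := ∑ x, P x y with hS
  have hSnn : 0 ≤ S := Finset.sum_nonneg fun x _ => hP x y
  rcases eq_or_lt_of_le hSnn with hS0 | hSpos
  · have hpz : ∀ x, P x y = 0 := by
      intro x
      by_contra hne
      have hx : 0 < P x y := lt_of_le_of_ne (hP x y) (Ne.symm hne)
      have h2 : P x y ≤ S := Finset.single_le_sum (fun i _ => hP i y) (Finset.mem_univ x)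
      linarith [hS0]
    have hL : ∑ x, P x y * (G y x : ℝ) ^ ρ = 0 := by
      apply Finset.sum_eq_zero; intro x _; rw [hpz x]; ring
    rw [hL, ← hS0, zero_mul]
  · have hcond : ∑ x, (P x y / S) ^ (1/(1+ρ)) = (∑ x, P x y ^ (1/(1+ρ))) / S ^ (1/(1+ρ)) := by
      rw [Finset.sum_div]
      apply Finset.sum_congr rfl
      intro x _
      exact div_rpow (hP x y) hSnn _
    set T := ∑ x, P x y ^ (1/(1+ρ)) with hT
    have hTnn : 0 ≤ T := Finset.sum_nonneg fun x _ => rpow_nonneg (hP x y) _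
    have hSβ : 0 < S ^ (1/(1+ρ)) := rpow_pos_of_pos hSpos _
    have hRHS : S * (∑ x, (P x y / S) ^ (1/(1+ρ))) ^ (1+ρ) = T ^ (1+ρ) := by
      rw [hcond, div_rpow hTnn hSβ.le, ← Real.rpow_mul hSnn]
      have h1 : 1/(1+ρ) * (1+ρ) = 1 := by field_simp
      rw [h1, Real.rpow_one, mul_comm, div_mul_cancel₀ _ (ne_of_gt hSpos)]
    rw [hRHS]
    exact arikan_single (fun x => P x y) (fun x => hP x y) (G y) (hbij y)
      (fun x x' h => hord y x x' h) ρ hρ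
end

section
/- Let m_n satisfy m_n/n → λ ∈ [0,1], and let the sequence to guess be X^n = (U^{m_n}, V^{n−m_n}), where U^{m_n} is i.i.d. Bern(1/2) and V^{n−m_n} is i.i.d. Bern(p) with p ≤ 1/2, all independent. Then lim_{n→∞} (1/n) log E[G*(X^n)^ρ] = λρ·log 2 + (1−λ)·ρ·H_{1/(1+ρ)}(p), where G* is the optimal guessing function for the concatenated sequence and H_α(p) is the binary Rényi entropy of order α in nats. -/
/-- pmf of the concatenated sequence: the first `mn n` coordinates are i.i.d.
`Bern(1/2)` and the remaining ones are i.i.d. `Bern(p)` (`true` has probability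
`p`). -/
noncomputable def concatPMF (p : ℝ) (mn : ℕ → ℕ) (n : ℕ) (z : Fin n → Bool) : ℝ :=
  ∏ i : Fin n, if (i : ℕ) < mn n then (1 / 2 : ℝ) else if z i then p else 1 - p


open Finset Real


lemma myCardFilter {n m : ℕ} (h : m ≤ n) :
    (Finset.univ.filter fun i : Fin n => (i : ℕ) < m).card = m := by
  have : (Finset.univ.filter fun i : Fin n => (i : ℕ) < m)
      = Finset.map (Fin.castLEEmb h) Finset.univ := by
    ext i
    simp only [Finset.mem_filter, Finset.mem_univ, true_and, Finset.mem_map,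
      Fin.castLEEmb, Function.Embedding.coeFn_mk]
    constructor
    · intro hi; exact ⟨⟨i, hi⟩, rfl⟩
    · rintro ⟨j, rfl⟩; exact j.2
  rw [this]; simp

lemma mySumProdBool {n : ℕ} (f : Fin n → Bool → ℝ) :
    ∑ z : Fin n → Bool, ∏ i, f i (z i) = ∏ i, (f i true + f i false) := by
  have := Finset.prod_univ_sum (fun _ : Fin n => (Finset.univ : Finset Bool)) f
  rw [Fintype.piFinset_univ] at this
  rw [← this]
  exact Finset.prod_congr rfl fun i _ => by rw [Fintype.sum_bool]

lemma myProdIte {n m : ℕ} (h : m ≤ n) (a b : ℝ) :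
    (∏ i : Fin n, if (i : ℕ) < m then a else b) = a ^ m * b ^ (n - m) := by
  rw [Finset.prod_ite, Finset.prod_const, Finset.prod_const, myCardFilter h]
  congr 2
  rw [Finset.filter_not, Finset.card_sdiff_of_subset (Finset.filter_subset _ _), myCardFilter h,
    Finset.card_univ, Fintype.card_fin]

lemma concatPMF_nonneg {p : ℝ} (hp0 : 0 ≤ p) (hp1 : p ≤ 1) (mn : ℕ → ℕ) (n : ℕ)
    (z : Fin n → Bool) : 0 ≤ concatPMF p mn n z := by
  refine Finset.prod_nonneg fun i _ => ?_
  split_ifs <;> norm_num <;> linarith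

lemma sum_concatPMF {p : ℝ} (mn : ℕ → ℕ) (n : ℕ) :
    ∑ z : Fin n → Bool, concatPMF p mn n z = 1 := by
  unfold concatPMF
  rw [mySumProdBool (fun i b => if (i : ℕ) < mn n then (1 / 2 : ℝ) else if b then p else 1 - p)]
  refine Finset.prod_eq_one fun i _ => ?_
  by_cases h : (i : ℕ) < mn n <;> simp [h] <;> ring

lemma sum_concatPMF_rpow {p : ℝ} (hp0 : 0 ≤ p) (hp1 : p ≤ 1) (mn : ℕ → ℕ) (n : ℕ)
    (hmn : mn n ≤ n) (α : ℝ) :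
    ∑ z : Fin n → Bool, concatPMF p mn n z ^ α
      = (((1:ℝ)/2) ^ α + ((1:ℝ)/2) ^ α) ^ mn n * (p ^ α + (1 - p) ^ α) ^ (n - mn n) := by
  have h1 : ∀ z : Fin n → Bool, concatPMF p mn n z ^ α
      = ∏ i : Fin n, (if (i : ℕ) < mn n then (1 / 2 : ℝ) else if z i then p else 1 - p) ^ α := by
    intro z
    rw [Real.finset_prod_rpow _ _ (fun i _ => by split_ifs <;> norm_num <;> linarith) α]
    rfl
  simp only [h1]
  have h2 : ∀ (i : Fin n) (b : Bool),
      (if (i : ℕ) < mn n then (1 / 2 : ℝ) else if b then p else 1 - p) ^ α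
      = (if (i : ℕ) < mn n then ((1:ℝ)/2) ^ α else if b then p ^ α else (1 - p) ^ α) := by
    intro i b; split_ifs <;> rfl
  simp only [h2]
  rw [mySumProdBool (fun i b => if (i : ℕ) < mn n then ((1:ℝ)/2) ^ α else if b then p ^ α else (1 - p) ^ α)]
  have h3 : ∀ i ∈ (Finset.univ : Finset (Fin n)),
      ((if (i : ℕ) < mn n then ((1:ℝ)/2) ^ α else if true then p ^ α else (1 - p) ^ α)
        + (if (i : ℕ) < mn n then ((1:ℝ)/2) ^ α else if false then p ^ α else (1 - p) ^ α))
      = (if (i : ℕ) < mn n then ((1:ℝ)/2) ^ α + ((1:ℝ)/2) ^ α else p ^ α + (1 - p) ^ α) := by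
    intro i _; by_cases h : (i : ℕ) < mn n <;> simp [h]
  rw [Finset.prod_congr rfl h3, myProdIte hmn]

lemma myCount {p : ℝ} {mn : ℕ → ℕ} {n : ℕ} (hp0 : 0 ≤ p) (hp1 : p ≤ 1)
    {G : (Fin n → Bool) → ℕ} (hbij : Set.BijOn G Set.univ (Set.Icc 1 (2 ^ n)))
    (hord : ∀ z z', G z ≤ G z' → concatPMF p mn n z' ≤ concatPMF p mn n z)
    {α : ℝ} (hα : 0 ≤ α) (z : Fin n → Bool) :
    (G z : ℝ) * concatPMF p mn n z ^ α ≤ ∑ z', concatPMF p mn n z' ^ α := by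
  have hmem : ∀ z', G z' ∈ Set.Icc 1 (2 ^ n) := fun z' => hbij.mapsTo (Set.mem_univ z')
  have hcard : (Finset.univ.filter fun z' => G z' ≤ G z).card = G z := by
    have h : (Finset.univ.filter fun z' => G z' ≤ G z).card = (Finset.Icc 1 (G z)).card := by
      refine Finset.card_bij (fun z' _ => G z') ?_ ?_ ?_
      · intro a ha
        rw [Finset.mem_filter] at ha
        exact Finset.mem_Icc.2 ⟨(hmem a).1, ha.2⟩
      · intro a _ b _ hab
        exact hbij.injOn (Set.mem_univ a) (Set.mem_univ b) hab
      · intro b hb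
        rw [Finset.mem_Icc] at hb
        have hb2 : b ∈ Set.Icc 1 (2 ^ n) := ⟨hb.1, le_trans hb.2 (hmem z).2⟩
        obtain ⟨a, -, ha⟩ := hbij.surjOn hb2
        exact ⟨a, Finset.mem_filter.2 ⟨Finset.mem_univ a, by rw [ha]; exact hb.2⟩, ha⟩
    rw [h, Nat.card_Icc]
    omega
  calc (G z : ℝ) * concatPMF p mn n z ^ α
      = (Finset.univ.filter fun z' => G z' ≤ G z).card • concatPMF p mn n z ^ α := by
        rw [hcard, nsmul_eq_mul]
    _ ≤ ∑ z' ∈ Finset.univ.filter fun z' => G z' ≤ G z, concatPMF p mn n z' ^ α := by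
        refine Finset.card_nsmul_le_sum _ _ _ fun x hx => ?_
        rw [Finset.mem_filter] at hx
        exact Real.rpow_le_rpow (concatPMF_nonneg hp0 hp1 mn n z) (hord x z hx.2) hα
    _ ≤ ∑ z', concatPMF p mn n z' ^ α :=
        Finset.sum_le_sum_of_subset_of_nonneg (Finset.filter_subset _ _) fun x _ _ =>
          Real.rpow_nonneg (concatPMF_nonneg hp0 hp1 mn n x) α

lemma mySpos {p : ℝ} {mn : ℕ → ℕ} {n : ℕ} (hp0 : 0 ≤ p) (hp1 : p ≤ 1) (α : ℝ) :
    0 < ∑ z, concatPMF p mn n z ^ α := by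
  obtain ⟨z0, hz0⟩ : ∃ z0, 0 < concatPMF p mn n z0 := by
    by_contra h
    push_neg at h
    have h1 : ∑ z, concatPMF p mn n z ≤ 0 :=
      Finset.sum_nonpos fun z _ => h z
    rw [sum_concatPMF mn n] at h1
    linarith
  exact Finset.sum_pos' (fun x _ => Real.rpow_nonneg (concatPMF_nonneg hp0 hp1 mn n x) α)
    ⟨z0, Finset.mem_univ z0, Real.rpow_pos_of_pos hz0 α⟩

lemma myUpper {p : ℝ} {mn : ℕ → ℕ} {n : ℕ} (hp0 : 0 ≤ p) (hp1 : p ≤ 1)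
    {G : (Fin n → Bool) → ℕ} (hbij : Set.BijOn G Set.univ (Set.Icc 1 (2 ^ n)))
    (hord : ∀ z z', G z ≤ G z' → concatPMF p mn n z' ≤ concatPMF p mn n z)
    {ρ : ℝ} (hρ : 0 < ρ) :
    ∑ z, concatPMF p mn n z * (G z : ℝ) ^ ρ
      ≤ (∑ z, concatPMF p mn n z ^ (1/(1+ρ))) ^ ρ * ∑ z, concatPMF p mn n z ^ (1/(1+ρ)) := by
  set α : ℝ := 1/(1+ρ) with hαdef
  have h1ρ : (0:ℝ) < 1 + ρ := by linarith
  have hα0 : 0 < α := by positivity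
  set S : ℝ := ∑ z, concatPMF p mn n z ^ α with hSdef
  have hS0 : 0 < S := mySpos hp0 hp1 α
  calc ∑ z, concatPMF p mn n z * (G z : ℝ) ^ ρ
      ≤ ∑ z, S ^ ρ * concatPMF p mn n z ^ α := by
        refine Finset.sum_le_sum fun z _ => ?_
        rcases eq_or_lt_of_le (concatPMF_nonneg hp0 hp1 mn n z) with h0 | hPz
        · rw [← h0, Real.zero_rpow (ne_of_gt hα0)]
          simp
        · have hGle : (G z : ℝ) ≤ S / concatPMF p mn n z ^ α := by
            rw [le_div_iff₀ (Real.rpow_pos_of_pos hPz α)]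
            exact myCount hp0 hp1 hbij hord hα0.le z
          have hGρ : (G z : ℝ) ^ ρ ≤ (S / concatPMF p mn n z ^ α) ^ ρ :=
            Real.rpow_le_rpow (Nat.cast_nonneg _) hGle hρ.le
          have hexp : 1 - α * ρ = α := by rw [hαdef]; field_simp; ring
          calc concatPMF p mn n z * (G z : ℝ) ^ ρ
              ≤ concatPMF p mn n z * (S / concatPMF p mn n z ^ α) ^ ρ :=
                mul_le_mul_of_nonneg_left hGρ hPz.le
            _ = concatPMF p mn n z * (S ^ ρ / concatPMF p mn n z ^ (α * ρ)) := by
                rw [Real.div_rpow hS0.le (Real.rpow_nonneg hPz.le α),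
                  ← Real.rpow_mul hPz.le]
            _ = S ^ ρ * (concatPMF p mn n z ^ (1:ℝ) / concatPMF p mn n z ^ (α * ρ)) := by
                rw [Real.rpow_one]; ring
            _ = S ^ ρ * concatPMF p mn n z ^ (1 - α * ρ) := by
                rw [← Real.rpow_sub hPz]
            _ = S ^ ρ * concatPMF p mn n z ^ α := by rw [hexp]
    _ = S ^ ρ * S := by rw [← Finset.mul_sum]

lemma myHarm {n : ℕ} {G : (Fin n → Bool) → ℕ}
    (hbij : Set.BijOn G Set.univ (Set.Icc 1 (2 ^ n))) :
    ∑ z : Fin n → Bool, ((G z : ℝ))⁻¹ ≤ 1 + n * Real.log 2 := by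
  have heq : ∑ z : Fin n → Bool, ((G z : ℝ))⁻¹ = ∑ i ∈ Finset.Icc (1:ℕ) (2 ^ n), ((i : ℝ))⁻¹ := by
    refine Finset.sum_bij (fun z _ => G z) ?_ ?_ ?_ ?_
    · intro a _
      have := hbij.mapsTo (Set.mem_univ a)
      exact Finset.mem_Icc.2 ⟨this.1, this.2⟩
    · intro a _ b _ hab
      exact hbij.injOn (Set.mem_univ a) (Set.mem_univ b) hab
    · intro b hb
      rw [Finset.mem_Icc] at hb
      obtain ⟨a, -, ha⟩ := hbij.surjOn (Set.mem_Icc.2 ⟨hb.1, hb.2⟩)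
      exact ⟨a, Finset.mem_univ a, ha⟩
    · intro a _; rfl
  rw [heq]
  have h1 : ∑ i ∈ Finset.Icc (1:ℕ) (2 ^ n), ((i : ℝ))⁻¹ = (harmonic (2 ^ n) : ℝ) := by
    rw [harmonic_eq_sum_Icc]
    push_cast
    rfl
  rw [h1]
  calc (harmonic (2 ^ n) : ℝ) ≤ 1 + Real.log ((2 : ℕ) ^ n : ℕ) := harmonic_le_one_add_log _
    _ = 1 + n * Real.log 2 := by
        rw [Nat.cast_pow, Real.log_pow]
        norm_num

lemma myLower {p : ℝ} {mn : ℕ → ℕ} {n : ℕ} (hp0 : 0 ≤ p) (hp1 : p ≤ 1)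
    {G : (Fin n → Bool) → ℕ} (hbij : Set.BijOn G Set.univ (Set.Icc 1 (2 ^ n)))
    {ρ : ℝ} (hρ : 0 < ρ) :
    ∑ z, concatPMF p mn n z ^ (1/(1+ρ))
      ≤ (∑ z, concatPMF p mn n z * (G z : ℝ) ^ ρ) ^ (1/(1+ρ))
        * (1 + n * Real.log 2) ^ (1 - 1/(1+ρ)) := by
  set α : ℝ := 1/(1+ρ) with hαdef
  have h1ρ : (0:ℝ) < 1 + ρ := by linarith
  have hα0 : 0 < α := by positivity
  have hGpos : ∀ z, (0:ℝ) < (G z : ℝ) := by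
    intro z
    have := (hbij.mapsTo (Set.mem_univ z)).1
    exact_mod_cast Nat.lt_of_lt_of_le Nat.zero_lt_one this
  have hPnn : ∀ z, 0 ≤ concatPMF p mn n z := concatPMF_nonneg hp0 hp1 mn n
  have hconj : Real.HolderConjugate (1+ρ) ((1+ρ)/ρ) := by
    rw [Real.holderConjugate_iff]
    constructor
    · linarith
    · rw [inv_div]
      field_simp
  have holder := Real.inner_le_Lp_mul_Lq_of_nonneg Finset.univ hconj
    (f := fun z => concatPMF p mn n z ^ α * (G z : ℝ) ^ (α * ρ))
    (g := fun z => (G z : ℝ) ^ (-(α * ρ)))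
    (fun z _ => mul_nonneg (Real.rpow_nonneg (hPnn z) α) (Real.rpow_nonneg (hGpos z).le _))
    (fun z _ => Real.rpow_nonneg (hGpos z).le _)
  have hfg : ∀ z : Fin n → Bool,
      concatPMF p mn n z ^ α * (G z : ℝ) ^ (α * ρ) * (G z : ℝ) ^ (-(α * ρ))
        = concatPMF p mn n z ^ α := by
    intro z
    rw [mul_assoc, ← Real.rpow_add (hGpos z)]
    simp
  have hf : ∀ z : Fin n → Bool,
      (concatPMF p mn n z ^ α * (G z : ℝ) ^ (α * ρ)) ^ ((1:ℝ)+ρ)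
        = concatPMF p mn n z * (G z : ℝ) ^ ρ := by
    intro z
    rw [Real.mul_rpow (Real.rpow_nonneg (hPnn z) α) (Real.rpow_nonneg (hGpos z).le _),
      ← Real.rpow_mul (hPnn z), ← Real.rpow_mul (hGpos z).le]
    have e1 : α * (1+ρ) = 1 := by rw [hαdef]; field_simp
    have e2 : α * ρ * (1+ρ) = ρ := by rw [hαdef]; field_simp; try ring
    rw [e1, e2, Real.rpow_one]
  have hg : ∀ z : Fin n → Bool,
      ((G z : ℝ) ^ (-(α * ρ))) ^ ((1+ρ)/ρ) = ((G z : ℝ))⁻¹ := by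
    intro z
    rw [← Real.rpow_mul (hGpos z).le]
    have e3 : -(α * ρ) * ((1+ρ)/ρ) = -1 := by
      rw [hαdef]; field_simp; try ring
    rw [e3, Real.rpow_neg_one]
  simp only [hfg, hf, hg] at holder
  have e4 : 1/((1+ρ)/ρ) = 1 - α := by
    rw [hαdef, one_div_div]
    field_simp
    try ring
  rw [e4] at holder
  refine le_trans holder ?_
  have hE0 : (0:ℝ) ≤ ∑ z, concatPMF p mn n z * (G z : ℝ) ^ ρ :=
    Finset.sum_nonneg fun z _ => mul_nonneg (hPnn z) (Real.rpow_nonneg (hGpos z).le ρ)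
  have hHnn : (0:ℝ) ≤ ∑ z : Fin n → Bool, ((G z : ℝ))⁻¹ :=
    Finset.sum_nonneg fun z _ => (inv_nonneg).2 (hGpos z).le
  refine mul_le_mul_of_nonneg_left ?_ (Real.rpow_nonneg hE0 _)
  refine Real.rpow_le_rpow hHnn (myHarm hbij) ?_
  have : α < 1 := by
    rw [hαdef]
    rw [div_lt_one h1ρ]
    linarith
  linarith

/-- Guesswork exponent of a concatenation of a uniform block of length
`mn n ≈ λn` and an i.i.d. `Bern(p)` block (`p ≤ 1/2`):
`lim (1/n) log E[G*(X^n)^ρ] = λρ log 2 + (1−λ)ρ H_{1/(1+ρ)}(p)`, where `G* n`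
is the optimal guessing function (a bijection onto `{1,...,2^n}` ordered by
non-increasing probability) and `H_α(p) = (1/(1−α)) log(p^α + (1−p)^α)`. -/
theorem concat_guesswork_exponent (p : ℝ) (hp0 : 0 ≤ p) (hp : p ≤ 1 / 2)
    (ρ : ℝ) (hρ : 0 < ρ) (lam : ℝ) (hlam01 : lam ∈ Set.Icc (0 : ℝ) 1)
    (mn : ℕ → ℕ) (hmn : ∀ n, mn n ≤ n)
    (hlam : Filter.Tendsto (fun n : ℕ => (mn n : ℝ) / n) Filter.atTop (nhds lam))
    (G : (n : ℕ) → (Fin n → Bool) → ℕ)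
    (hbij : ∀ n, Set.BijOn (G n) Set.univ (Set.Icc 1 (2 ^ n)))
    (hord : ∀ n z z', G n z ≤ G n z' → concatPMF p mn n z' ≤ concatPMF p mn n z) :
    Filter.Tendsto
      (fun n : ℕ => (1 / (n : ℝ)) * Real.log
        (∑ z : Fin n → Bool, concatPMF p mn n z * (G n z : ℝ) ^ ρ))
      Filter.atTop
      (nhds (lam * ρ * Real.log 2 +
        (1 - lam) * ρ * ((1 / (1 - 1 / (1 + ρ))) *
          Real.log (p ^ (1 / (1 + ρ)) + (1 - p) ^ (1 / (1 + ρ)))))) := by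
  have hp1 : p ≤ 1 := by linarith
  have h1ρ : (0:ℝ) < 1 + ρ := by linarith
  have h1ρ' : (1:ℝ) + ρ ≠ 0 := h1ρ.ne'
  have hρ' : ρ ≠ 0 := hρ.ne'
  set K : ℝ := Real.log (p ^ (1/(1+ρ)) + (1 - p) ^ (1/(1+ρ))) with hKdef
  set L : ℝ := Real.log 2 with hLdef
  -- positivity facts
  have hB0 : (0:ℝ) < p ^ (1/(1+ρ)) + (1 - p) ^ (1/(1+ρ)) := by
    have h2 : (0:ℝ) < 1 - p := by linarith
    have := Real.rpow_pos_of_pos h2 (1/(1+ρ))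
    have := Real.rpow_nonneg hp0 (1/(1+ρ))
    linarith
  have hA0 : (0:ℝ) < ((1:ℝ)/2) ^ (1/(1+ρ)) + ((1:ℝ)/2) ^ (1/(1+ρ)) := by
    have := Real.rpow_pos_of_pos (by norm_num : (0:ℝ) < 1/2) (1/(1+ρ))
    linarith
  have hlogA : Real.log (((1:ℝ)/2) ^ (1/(1+ρ)) + ((1:ℝ)/2) ^ (1/(1+ρ)))
      = (1 - 1/(1+ρ)) * L := by
    have hh : ((1:ℝ)/2) ^ (1/(1+ρ)) + ((1:ℝ)/2) ^ (1/(1+ρ))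
        = 2 * ((1:ℝ)/2) ^ (1/(1+ρ)) := by ring
    rw [hh, Real.log_mul two_ne_zero
      (Real.rpow_pos_of_pos (by norm_num : (0:ℝ) < 1/2) _).ne',
      Real.log_rpow (by norm_num : (0:ℝ) < 1/2),
      show ((1:ℝ)/2) = 2⁻¹ by norm_num, Real.log_inv, hLdef]
    ring
  -- log of S
  have hS0 : ∀ n : ℕ, (0:ℝ) < ∑ z, concatPMF p mn n z ^ (1/(1+ρ)) :=
    fun n => mySpos hp0 hp1 _
  have hlogS : ∀ n : ℕ, Real.log (∑ z, concatPMF p mn n z ^ (1/(1+ρ)))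
      = (mn n : ℝ) * ((1 - 1/(1+ρ)) * L) + ((n : ℝ) - mn n) * K := by
    intro n
    rw [sum_concatPMF_rpow hp0 hp1 mn n (hmn n), Real.log_mul
      (pow_ne_zero _ hA0.ne') (pow_ne_zero _ hB0.ne'), Real.log_pow, Real.log_pow,
      hlogA, ← hKdef]
    rw [Nat.cast_sub (hmn n)]
  -- E is at least 1
  have hPnn : ∀ n z, 0 ≤ concatPMF p mn n z := fun n => concatPMF_nonneg hp0 hp1 mn n
  have hE1 : ∀ n : ℕ, (1:ℝ) ≤ ∑ z, concatPMF p mn n z * (G n z : ℝ) ^ ρ := by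
    intro n
    have hG1 : ∀ z, 1 ≤ G n z := fun z => ((hbij n).mapsTo (Set.mem_univ z)).1
    calc (1:ℝ) = ∑ z, concatPMF p mn n z := (sum_concatPMF mn n).symm
      _ ≤ ∑ z, concatPMF p mn n z * (G n z : ℝ) ^ ρ := by
          refine Finset.sum_le_sum fun z _ => ?_
          have h1 : (1:ℝ) ≤ (G n z : ℝ) ^ ρ := by
            rw [← Real.one_rpow ρ]
            exact Real.rpow_le_rpow zero_le_one (by exact_mod_cast hG1 z) hρ.le
          exact le_mul_of_one_le_right (hPnn n z) h1
  have hEpos : ∀ n : ℕ, (0:ℝ) < ∑ z, concatPMF p mn n z * (G n z : ℝ) ^ ρ :=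
    fun n => lt_of_lt_of_le one_pos (hE1 n)
  -- upper log bound
  have hub : ∀ n : ℕ, Real.log (∑ z, concatPMF p mn n z * (G n z : ℝ) ^ ρ)
      ≤ (1+ρ) * Real.log (∑ z, concatPMF p mn n z ^ (1/(1+ρ))) := by
    intro n
    have h := Real.log_le_log (hEpos n) (myUpper hp0 hp1 (hbij n) (hord n) hρ)
    rw [Real.log_mul (Real.rpow_pos_of_pos (hS0 n) ρ).ne' (hS0 n).ne',
      Real.log_rpow (hS0 n)] at h
    linarith
  -- lower log bound
  have hCpos : ∀ n : ℕ, (0:ℝ) < 1 + n * L := by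
    intro n
    have : (0:ℝ) ≤ (n : ℝ) * L :=
      mul_nonneg (Nat.cast_nonneg n) (Real.log_nonneg one_le_two)
    linarith
  have hlb : ∀ n : ℕ,
      (1+ρ) * Real.log (∑ z, concatPMF p mn n z ^ (1/(1+ρ))) - ρ * Real.log (1 + n * L)
        ≤ Real.log (∑ z, concatPMF p mn n z * (G n z : ℝ) ^ ρ) := by
    intro n
    have h := Real.log_le_log (hS0 n) (myLower hp0 hp1 (hbij n) hρ)
    rw [Real.log_mul (Real.rpow_pos_of_pos (hEpos n) _).ne'
        (Real.rpow_pos_of_pos (hCpos n) _).ne',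
      Real.log_rpow (hEpos n), Real.log_rpow (hCpos n)] at h
    have h2 := mul_le_mul_of_nonneg_left h h1ρ.le
    have h3 : (1+ρ) * ((1/(1+ρ)) * Real.log (∑ z, concatPMF p mn n z * (G n z : ℝ) ^ ρ)
        + (1 - 1/(1+ρ)) * Real.log (1 + n * L))
        = Real.log (∑ z, concatPMF p mn n z * (G n z : ℝ) ^ ρ) + ρ * Real.log (1 + n * L) := by
      field_simp
      try ring
    rw [h3] at h2
    linarith
  -- sandwich functions
  set u : ℕ → ℝ := fun n => (1/(n:ℝ)) *
    ((1+ρ) * Real.log (∑ z, concatPMF p mn n z ^ (1/(1+ρ)))) with hudef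
  set c : ℕ → ℝ := fun n => (1/(n:ℝ)) * (ρ * Real.log (1 + n * L)) with hcdef
  have hboundu : ∀ n : ℕ, (1/(n:ℝ)) * Real.log
      (∑ z, concatPMF p mn n z * (G n z : ℝ) ^ ρ) ≤ u n := fun n =>
    mul_le_mul_of_nonneg_left (hub n) (by positivity)
  have hboundl : ∀ n : ℕ, u n - c n ≤ (1/(n:ℝ)) * Real.log
      (∑ z, concatPMF p mn n z * (G n z : ℝ) ^ ρ) := by
    intro n
    have := mul_le_mul_of_nonneg_left (hlb n) (by positivity : (0:ℝ) ≤ 1/(n:ℝ))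
    calc u n - c n = (1/(n:ℝ)) *
        ((1+ρ) * Real.log (∑ z, concatPMF p mn n z ^ (1/(1+ρ))) - ρ * Real.log (1 + n * L)) := by
          rw [hudef, hcdef]; ring
      _ ≤ _ := this
  -- limit of u
  have hueq : ∀ᶠ n : ℕ in Filter.atTop, u n
      = ρ * ((mn n : ℝ)/n) * L + (1+ρ) * (1 - (mn n : ℝ)/n) * K := by
    filter_upwards [Filter.eventually_ge_atTop 1] with n hn
    have hn0 : (n:ℝ) ≠ 0 := Nat.cast_ne_zero.2 (by omega)
    rw [hudef]
    simp only []
    rw [hlogS n]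
    field_simp
    try ring
  have htu : Filter.Tendsto (fun n : ℕ => ρ * ((mn n : ℝ)/n) * L + (1+ρ) * (1 - (mn n : ℝ)/n) * K)
      Filter.atTop (nhds (ρ * lam * L + (1+ρ) * (1 - lam) * K)) :=
    (((hlam.const_mul ρ).mul_const L).add
      (((tendsto_const_nhds.sub hlam).const_mul (1+ρ)).mul_const K))
  have hu : Filter.Tendsto u Filter.atTop (nhds (ρ * lam * L + (1+ρ) * (1 - lam) * K)) :=
    htu.congr' (Filter.EventuallyEq.symm hueq)
  -- limit of c
  have hCtop : Filter.Tendsto (fun n : ℕ => 1 + (n:ℝ) * L) Filter.atTop Filter.atTop :=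
    Filter.tendsto_atTop_add_const_left _ 1
      (Filter.Tendsto.atTop_mul_const (Real.log_pos one_lt_two)
        tendsto_natCast_atTop_atTop)
  have hld : Filter.Tendsto (fun x : ℝ => Real.log x / x) Filter.atTop (nhds 0) :=
    Real.isLittleO_log_id_atTop.tendsto_div_nhds_zero
  have hc1 : Filter.Tendsto (fun n : ℕ => Real.log (1 + (n:ℝ) * L) / (1 + (n:ℝ) * L))
      Filter.atTop (nhds 0) := hld.comp hCtop
  have hc2 : Filter.Tendsto (fun n : ℕ => (1 + (n:ℝ) * L) / n) Filter.atTop (nhds L) := by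
    have base : Filter.Tendsto (fun n : ℕ => 1/(n:ℝ) + L) Filter.atTop (nhds L) := by
      have := tendsto_one_div_atTop_nhds_zero_nat.add (tendsto_const_nhds (x := L))
      simpa using this
    refine base.congr' ?_
    filter_upwards [Filter.eventually_ge_atTop 1] with n hn
    have hn0 : (n:ℝ) ≠ 0 := Nat.cast_ne_zero.2 (by omega)
    field_simp
  have hc : Filter.Tendsto c Filter.atTop (nhds 0) := by
    have hmul : Filter.Tendsto (fun n : ℕ =>
        ρ * (Real.log (1 + (n:ℝ) * L) / (1 + (n:ℝ) * L) * ((1 + (n:ℝ) * L) / n)))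
        Filter.atTop (nhds 0) := by
      have := (hc1.mul hc2).const_mul ρ
      simpa using this
    refine hmul.congr' ?_
    filter_upwards [Filter.eventually_ge_atTop 1] with n hn
    have hn0 : (n:ℝ) ≠ 0 := Nat.cast_ne_zero.2 (by omega)
    rw [hcdef]
    simp only []
    field_simp [(hCpos n).ne']
    try ring
  have hl : Filter.Tendsto (fun n : ℕ => u n - c n) Filter.atTop
      (nhds (ρ * lam * L + (1+ρ) * (1 - lam) * K)) := by
    have := hu.sub hc
    simpa using this
  -- final squeeze
  have hT : lam * ρ * L + (1 - lam) * ρ * ((1 / (1 - 1 / (1 + ρ))) * K)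
      = ρ * lam * L + (1+ρ) * (1 - lam) * K := by
    have e : (1:ℝ) - 1/(1+ρ) = ρ/(1+ρ) := by field_simp; ring
    rw [e]
    field_simp
  rw [hT]
  exact tendsto_of_tendsto_of_tendsto_of_le_of_le hl hu hboundl hboundu
end

section
/- For 0 < ε < 1 and any integer m ≥ 2, log(1 + ε^m) < sup_{λ∈[0,1]} [λ log 2 − m·D(λ‖ε)], i.e., the centralized average-guesswork exponent with m coordinated agents and BEC(ε) side information is strictly smaller than the decentralized exponent with the same m uncoordinated agents. -/
/-- Binary Kullback–Leibler divergence between `Bernoulli(p)` and `Bernoulli(q)`. -/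
noncomputable def binKL (p q : ℝ) : ℝ :=
  p * Real.log (p / q) + (1 - p) * Real.log ((1 - p) / (1 - q))

lemma aux_log_lb (l q : ℝ) (hl : 0 ≤ l) (hq : 0 < q) (hq1 : q ≤ 1) :
    -1 ≤ l * Real.log (l / q) := by
  rcases eq_or_lt_of_le hl with h | h
  · simp [← h]
  · have hlog : Real.log (l / q) = Real.log l - Real.log q :=
      Real.log_div (ne_of_gt h) (ne_of_gt hq)
    have hq0 : Real.log q ≤ 0 := Real.log_nonpos (le_of_lt hq) hq1
    have hinv : Real.log l⁻¹ ≤ l⁻¹ - 1 :=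
      Real.log_le_sub_one_of_pos (by positivity)
    rw [Real.log_inv] at hinv
    have h1 : l - 1 ≤ l * Real.log l := by
      have := mul_le_mul_of_nonneg_left (neg_le_neg hinv) (le_of_lt h)
      have hl' : l * l⁻¹ = 1 := mul_inv_cancel₀ (ne_of_gt h)
      nlinarith
    nlinarith [mul_nonneg (le_of_lt h) (neg_nonneg.mpr hq0)]

lemma pow_ineq (ε : ℝ) (hε0 : 0 < ε) (hε1 : ε < 1) (m : ℕ) (hm : 2 ≤ m) :
    1 + ε ^ m < (1 - ε + ε * (2:ℝ) ^ ((1:ℝ)/m)) ^ m := by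
  set c : ℝ := (2:ℝ) ^ ((1:ℝ)/m) with hc
  have hm0 : (m:ℝ) ≠ 0 := by positivity
  have hc1 : 1 < c := by
    rw [hc]
    apply Real.one_lt_rpow_iff_of_pos (by norm_num) |>.mpr
    exact Or.inl ⟨by norm_num, one_div_pos.mpr (Nat.cast_pos.mpr (by omega))⟩
  have hcm : c ^ m = 2 := by
    rw [hc, ← Real.rpow_natCast ((2:ℝ) ^ ((1:ℝ)/m)) m, ← Real.rpow_mul (by norm_num)]
    rw [one_div, inv_mul_cancel₀ hm0, Real.rpow_one]
  set Z : ℝ := 1 - ε + ε * c with hZ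
  have hZ1 : 1 < Z := by nlinarith
  have hfac1 : (∑ i ∈ Finset.range m, Z ^ i * (ε * c) ^ (m - 1 - i)) * (Z - ε * c)
      = Z ^ m - (ε * c) ^ m := geom_sum₂_mul Z (ε * c) m
  have hfac2 : (∑ i ∈ Finset.range m, (1:ℝ) ^ i * ε ^ (m - 1 - i)) * (1 - ε)
      = 1 ^ m - ε ^ m := geom_sum₂_mul 1 ε m
  have hsum : (∑ i ∈ Finset.range m, (1:ℝ) ^ i * ε ^ (m - 1 - i))
      < ∑ i ∈ Finset.range m, Z ^ i * (ε * c) ^ (m - 1 - i) := by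
    apply Finset.sum_lt_sum
    · intro i _
      have h1 : (1:ℝ) ≤ Z ^ i := one_le_pow₀ (le_of_lt hZ1)
      have h2 : ε ^ (m-1-i) ≤ (ε * c) ^ (m-1-i) :=
        pow_le_pow_left₀ (le_of_lt hε0) (by nlinarith) _
      calc (1:ℝ) ^ i * ε ^ (m-1-i) = ε ^ (m-1-i) := by rw [one_pow, one_mul]
        _ ≤ (ε*c) ^ (m-1-i) := h2
        _ ≤ Z ^ i * (ε*c) ^ (m-1-i) := by
            have : 0 ≤ (ε*c) ^ (m-1-i) := by positivity
            nlinarith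
    · refine ⟨m - 1, Finset.mem_range.mpr (by omega), ?_⟩
      have : m - 1 - (m - 1) = 0 := by omega
      rw [this, pow_zero, pow_zero, mul_one, mul_one, one_pow]
      exact one_lt_pow₀ hZ1 (by omega)
  have hZc : Z - ε * c = 1 - ε := by ring
  have h2em : (ε * c) ^ m = 2 * ε ^ m := by rw [mul_pow, hcm]; ring
  rw [hZc] at hfac1
  rw [one_pow] at hfac2
  have hpos : (0:ℝ) < 1 - ε := by linarith
  nlinarith [mul_lt_mul_of_pos_right hsum hpos, hfac1, hfac2]

/-- For `0 < ε < 1` and any integer `m ≥ 2`, the centralized average-guesswork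
exponent `log(1 + ε^m)` with `m` coordinated agents and BEC(ε) side information
is strictly smaller than the decentralized exponent
`sup_{λ∈[0,1]} [λ log 2 − m·D(λ‖ε)]` with the same `m` uncoordinated agents. -/
theorem centralized_lt_decentralized_bec (ε : ℝ) (hε : ε ∈ Set.Ioo (0 : ℝ) 1)
    (m : ℕ) (hm : 2 ≤ m) :
    Real.log (1 + ε ^ m)
      < sSup {y : ℝ | ∃ l ∈ Set.Icc (0 : ℝ) 1,
          y = l * Real.log 2 - (m : ℝ) * binKL l ε} := by
  obtain ⟨hε0, hε1⟩ := hε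
  have hm0 : (m:ℝ) ≠ 0 := by positivity
  set c : ℝ := (2:ℝ) ^ ((1:ℝ)/m) with hc
  have hc1 : 1 < c := by
    rw [hc]
    apply Real.one_lt_rpow_iff_of_pos (by norm_num) |>.mpr
    exact Or.inl ⟨by norm_num, one_div_pos.mpr (Nat.cast_pos.mpr (by omega))⟩
  have hlogc : Real.log c = (1/m) * Real.log 2 := by
    rw [hc, Real.log_rpow (by norm_num)]
  set Z : ℝ := 1 - ε + ε * c with hZ
  have hZ1 : 1 < Z := by nlinarith
  have hZpos : 0 < Z := by linarith
  set l : ℝ := ε * c / Z with hl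
  have hl0 : 0 ≤ l := by positivity
  have hl1 : l ≤ 1 := by
    rw [hl, div_le_one hZpos]; nlinarith
  have h1ml : 1 - l = (1 - ε) / Z := by
    rw [hl]; field_simp; ring
  -- value of binKL at l
  have hratio1 : l / ε = c / Z := by
    rw [hl]; field_simp
  have hratio2 : (1 - l) / (1 - ε) = 1 / Z := by
    rw [h1ml, div_div, mul_comm Z (1-ε), ← div_div,
      div_self (by linarith : (1:ℝ) - ε ≠ 0)]
  have hbin : binKL l ε = l * ((1/m) * Real.log 2 - Real.log Z) + (1 - l) * (- Real.log Z) := by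
    unfold binKL
    rw [hratio1, hratio2, Real.log_div (by positivity) (ne_of_gt hZpos), hlogc,
      Real.log_div (by norm_num) (ne_of_gt hZpos), Real.log_one]
    ring
  have hmem : (m:ℝ) * Real.log Z ∈ {y : ℝ | ∃ l ∈ Set.Icc (0 : ℝ) 1,
      y = l * Real.log 2 - (m : ℝ) * binKL l ε} := by
    refine ⟨l, ⟨hl0, hl1⟩, ?_⟩
    rw [hbin]
    field_simp
    ring
  have hbdd : BddAbove {y : ℝ | ∃ l ∈ Set.Icc (0 : ℝ) 1,
      y = l * Real.log 2 - (m : ℝ) * binKL l ε} := by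
    refine ⟨Real.log 2 + 2 * m, ?_⟩
    rintro y ⟨t, ⟨ht0, ht1⟩, rfl⟩
    have hb1 : -1 ≤ t * Real.log (t / ε) := aux_log_lb t ε ht0 hε0 (le_of_lt hε1)
    have hb2 : -1 ≤ (1 - t) * Real.log ((1 - t) / (1 - ε)) :=
      aux_log_lb (1 - t) (1 - ε) (by linarith) (by linarith) (by linarith)
    have hbk : -2 ≤ binKL t ε := by unfold binKL; linarith
    have hlog2 : 0 ≤ Real.log 2 := Real.log_nonneg (by norm_num)
    have hmr : (2:ℝ) ≤ (m:ℝ) := by exact_mod_cast hm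
    nlinarith [mul_le_mul_of_nonneg_left (neg_le_neg hbk) (le_trans (by norm_num) hmr)]
  have hlt : Real.log (1 + ε ^ m) < (m:ℝ) * Real.log Z := by
    rw [← Real.log_pow]
    exact Real.log_lt_log (by positivity) (pow_ineq ε hε0 hε1 m hm)
  exact lt_csSup_of_lt hbdd hmem hlt
end
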